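/- The tensor T_{abc} = M_{abc} + (1/(n−p))W_aΠ_{bc} − (1/p)E_aP_{bc} vanishes identically if and only if ∇̄_aP_{bc} = −(1/p)E_aP_{bc} and ∇̄_aΠ_{bc} = −(1/(n−p))W_aΠ_{bc}, where ∇̄ is the bi-conformal connection. -/

import Mathlib

open scoped BigOperators

noncomputable section

/-- Points of the local chart, modelled as `ℝⁿ`. -/
abbrev Pt (n : ℕ) := Fin n → ℝ
/-- Scalar fields. -/
abbrev Sc (n : ℕ) := Pt n → ℝ
/-- Fields with one index. -/
abbrev Ten1 (n : ℕ) := Pt n → Fin n → ℝ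
/-- Fields with two indices. -/
abbrev Ten2 (n : ℕ) := Pt n → Fin n → Fin n → ℝ
/-- Fields with three indices. -/
abbrev Ten3 (n : ℕ) := Pt n → Fin n → Fin n → Fin n → ℝ
/-- Fields with four indices. -/
abbrev Ten4 (n : ℕ) := Pt n → Fin n → Fin n → Fin n → Fin n → ℝ

variable {n : ℕ}

/-- Partial derivative `∂ᵢ f (x)`. -/
def pd (i : Fin n) (f : Sc n) (x : Pt n) : ℝ :=
  fderiv ℝ f x (Pi.single i 1)

/-- Christoffel symbols `Γ^a_{bc}` of a metric `g` with inverse metric `ginv`. -/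
def christoffel (g ginv : Ten2 n) : Ten3 n := fun x a b c =>
  (1/2) * ∑ e, ginv x a e *
    (pd b (fun y => g y c e) x + pd c (fun y => g y b e) x - pd e (fun y => g y b c) x)

/-- Covariant derivative `∇_a T_{bc}` for a connection with coefficients `Γ^r_{ab}`. -/
def cov2 (Γ : Ten3 n) (T : Ten2 n) : Ten3 n := fun x a b c =>
  pd a (fun y => T y b c) x - (∑ r, Γ x r a b * T x r c) - ∑ r, Γ x r a c * T x b r

/-- Covariant derivative `∇_e T^{ab}`. -/
def cov20 (Γ : Ten3 n) (T : Ten2 n) : Ten3 n := fun x e a b =>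
  pd e (fun y => T y a b) x + (∑ r, Γ x a e r * T x r b) + ∑ r, Γ x b e r * T x a r

/-- Covariant derivative `∇_e T^a_b` (first index of `T` contravariant). -/
def cov11 (Γ : Ten3 n) (T : Ten2 n) : Ten3 n := fun x e a b =>
  pd e (fun y => T y a b) x + (∑ r, Γ x a e r * T x r b) - ∑ r, Γ x r e b * T x a r

/-- Covariant derivative `∇_a ω_b` of a 1-form. -/
def cov1 (Γ : Ten3 n) (ω : Ten1 n) : Ten2 n := fun x a b =>
  pd a (fun y => ω y b) x - ∑ r, Γ x r a b * ω x r

/-- Covariant derivative `∇_b ξ^a` of a vector field; result indexed as `x a b` = `∇_b ξ^a`. -/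
def covVec (Γ : Ten3 n) (ξ : Ten1 n) : Ten2 n := fun x a b =>
  pd b (fun y => ξ y a) x + ∑ r, Γ x a b r * ξ x r

/-- Covariant derivative `∇_e L^a_{bc}` of a (1,2) tensor; result indexed `x e a b c`. -/
def cov12 (Γ : Ten3 n) (L : Ten3 n) : Ten4 n := fun x e a b c =>
  pd e (fun y => L y a b c) x + (∑ r, Γ x a e r * L x r b c)
    - (∑ r, Γ x r e b * L x a r c) - ∑ r, Γ x r e c * L x a b r

/-- Curvature tensor `R^a_{bcd} = ∂_c Γ^a_{db} - ∂_d Γ^a_{cb} + Γ^a_{rc}Γ^r_{db} - Γ^a_{rd}Γ^r_{cb}`. -/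
def riem (Γ : Ten3 n) : Ten4 n := fun x a b c d =>
  pd c (fun y => Γ y a d b) x - pd d (fun y => Γ y a c b) x
    + (∑ r, Γ x a r c * Γ x r d b) - ∑ r, Γ x a r d * Γ x r c b

/-- Action of a vector field on a scalar, `ξ(f)`. -/
def lieSc (ξ : Ten1 n) (f : Sc n) : Sc n := fun x => ∑ c, ξ x c * pd c f x

/-- Lie derivative of a 1-form. -/
def lie1 (ξ : Ten1 n) (ω : Ten1 n) : Ten1 n := fun x a =>
  (∑ c, ξ x c * pd c (fun y => ω y a) x) + ∑ c, pd a (fun y => ξ y c) x * ω x c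

/-- Lie derivative of a covariant 2-tensor `T_{ab}`. -/
def lie2 (ξ : Ten1 n) (T : Ten2 n) : Ten2 n := fun x a b =>
  (∑ c, ξ x c * pd c (fun y => T y a b) x)
    + (∑ c, pd a (fun y => ξ y c) x * T x c b)
    + ∑ c, pd b (fun y => ξ y c) x * T x a c

/-- Lie derivative of a contravariant 2-tensor `T^{ab}`. -/
def lie20 (ξ : Ten1 n) (T : Ten2 n) : Ten2 n := fun x a b =>
  (∑ c, ξ x c * pd c (fun y => T y a b) x)
    - (∑ c, pd c (fun y => ξ y a) x * T x c b)
    - ∑ c, pd c (fun y => ξ y b) x * T x a c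

/-- Lie derivative of a mixed tensor `T^a_b`. -/
def lie11 (ξ : Ten1 n) (T : Ten2 n) : Ten2 n := fun x a b =>
  (∑ c, ξ x c * pd c (fun y => T y a b) x)
    - (∑ c, pd c (fun y => ξ y a) x * T x c b)
    + ∑ c, pd b (fun y => ξ y c) x * T x a c

/-- Lie derivative of a covariant 3-tensor `T_{abc}`. -/
def lie3 (ξ : Ten1 n) (T : Ten3 n) : Ten3 n := fun x a b c =>
  (∑ d, ξ x d * pd d (fun y => T y a b c) x)
    + (∑ d, pd a (fun y => ξ y d) x * T x d b c)
    + (∑ d, pd b (fun y => ξ y d) x * T x a d c)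
    + ∑ d, pd c (fun y => ξ y d) x * T x a b d

/-- Lie derivative of a (1,2) tensor `T^a_{bc}`. -/
def lie12 (ξ : Ten1 n) (T : Ten3 n) : Ten3 n := fun x a b c =>
  (∑ d, ξ x d * pd d (fun y => T y a b c) x)
    - (∑ d, pd d (fun y => ξ y a) x * T x d b c)
    + (∑ d, pd b (fun y => ξ y d) x * T x a d c)
    + ∑ d, pd c (fun y => ξ y d) x * T x a b d

/-- Lie derivative of connection coefficients `£_ξ Γ^a_{bc}` (standard coordinate formula,
equivalent to the derivative of the pullback of the connection by the flow of `ξ`). -/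
def lieConn (ξ : Ten1 n) (Γ : Ten3 n) : Ten3 n := fun x a b c =>
  (∑ d, ξ x d * pd d (fun y => Γ y a b c) x)
    - (∑ d, pd d (fun y => ξ y a) x * Γ x d b c)
    + (∑ d, pd b (fun y => ξ y d) x * Γ x a d c)
    + (∑ d, pd c (fun y => ξ y d) x * Γ x a b d)
    + pd b (fun y => pd c (fun z => ξ z a) y) x

/-- Lie bracket of vector fields. -/
def bracket (ξ η : Ten1 n) : Ten1 n := fun x a =>
  (∑ c, ξ x c * pd c (fun y => η y a) x) - ∑ c, η x c * pd c (fun y => ξ y a) x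

/-- Index raising of the first index: `T^a_b = g^{ac} T_{cb}`. -/
def mixUp (ginv T : Ten2 n) : Ten2 n := fun x a b => ∑ c, ginv x a c * T x c b

/-- Raising both indices: `T^{ab} = g^{ac} g^{bd} T_{cd}`. -/
def up2 (ginv T : Ten2 n) : Ten2 n := fun x a b => ∑ c, ∑ d, ginv x a c * ginv x b d * T x c d

/-- The tensor `M_{abc} = ∇_b P_{ac} + ∇_c P_{ab} - ∇_a P_{bc}` (Levi-Civita connection of `g`). -/
def Mtens (g ginv P : Ten2 n) : Ten3 n := fun x a b c =>
  cov2 (christoffel g ginv) P x b a c + cov2 (christoffel g ginv) P x c a b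
    - cov2 (christoffel g ginv) P x a b c

/-- The 1-form `E_a = M_{acb} P^{cb}`. -/
def Eform (g ginv P : Ten2 n) : Ten1 n := fun x a =>
  ∑ c, ∑ b, Mtens g ginv P x a c b * up2 ginv P x c b

/-- The 1-form `W_a = -M_{acb} Π^{cb}`. -/
def Wform (g ginv P Q : Ten2 n) : Ten1 n := fun x a =>
  - ∑ c, ∑ b, Mtens g ginv P x a c b * up2 ginv Q x c b

/-- The tensor `T_{abc} = M_{abc} + W_a Π_{bc}/(n-p) - E_a P_{bc}/p`. -/
def Ttens (p : ℝ) (g ginv P Q : Ten2 n) : Ten3 n := fun x a b c =>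
  Mtens g ginv P x a b c + (1/((n : ℝ) - p)) * Wform g ginv P Q x a * Q x b c
    - (1/p) * Eform g ginv P x a * P x b c

/-- The difference tensor `L^a_{bc}` of the bi-conformal connection. -/
def Ltens (p : ℝ) (g ginv P Q : Ten2 n) : Ten3 n := fun x a b c =>
  (1/(2*p)) * (Eform g ginv P x b * mixUp ginv P x a c
      + Eform g ginv P x c * mixUp ginv P x a b)
  + (1/(2*((n : ℝ) - p))) * (Wform g ginv P Q x b * mixUp ginv Q x a c
      + Wform g ginv P Q x c * mixUp ginv Q x a b)
  + (1/2) * ∑ r, (mixUp ginv P x a r - mixUp ginv Q x a r)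
      * (∑ s, ginv x r s * Mtens g ginv P x s b c)

/-- The bi-conformal connection `Γ̄^a_{bc} = γ^a_{bc} + L^a_{bc}`. -/
def biconn (p : ℝ) (g ginv P Q : Ten2 n) : Ten3 n := fun x a b c =>
  christoffel g ginv x a b c + Ltens p g ginv P Q x a b c

/-- The standing hypotheses: `g` a smooth pseudo-Riemannian metric with inverse `ginv`, and
`P`, `Q` smooth symmetric orthogonal complementary projectors with respect to `g`. -/
def ProjectorSetup (g ginv P Q : Ten2 n) : Prop :=
  (∀ a b, ContDiff ℝ (⊤ : ℕ∞) (fun x => g x a b)) ∧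
  (∀ a b, ContDiff ℝ (⊤ : ℕ∞) (fun x => ginv x a b)) ∧
  (∀ a b, ContDiff ℝ (⊤ : ℕ∞) (fun x => P x a b)) ∧
  (∀ x a b, g x a b = g x b a) ∧
  (∀ x a b, ginv x a b = ginv x b a) ∧
  (∀ x a b, P x a b = P x b a) ∧
  (∀ x a b, Q x a b = Q x b a) ∧
  (∀ x a b, (∑ c, g x a c * ginv x c b) = if a = b then (1:ℝ) else 0) ∧
  (∀ x a b, P x a b + Q x a b = g x a b) ∧
  (∀ x a b, (∑ c, P x a c * mixUp ginv P x c b) = P x a b) ∧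
  (∀ x a b, (∑ c, Q x a c * mixUp ginv Q x c b) = Q x a b) ∧
  (∀ x a b, (∑ c, P x a c * mixUp ginv Q x c b) = 0)

section PdCalc

variable {n : ℕ} {i : Fin n} {x : Pt n}

theorem pd_congr {f g : Sc n} (h : ∀ y, f y = g y) : pd i f x = pd i g x := by
  have : f = g := funext h
  rw [this]

theorem pd_const (c : ℝ) : pd i (fun _ => c) x = 0 := by
  simp [pd]

theorem pd_add {f g : Sc n} (hf : DifferentiableAt ℝ f x) (hg : DifferentiableAt ℝ g x) :
    pd i (fun y => f y + g y) x = pd i f x + pd i g x := by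
  simp only [pd]
  rw [fderiv_fun_add hf hg]; rfl

theorem pd_sub {f g : Sc n} (hf : DifferentiableAt ℝ f x) (hg : DifferentiableAt ℝ g x) :
    pd i (fun y => f y - g y) x = pd i f x - pd i g x := by
  simp only [pd]
  rw [fderiv_fun_sub hf hg]; rfl

theorem pd_mul {f g : Sc n} (hf : DifferentiableAt ℝ f x) (hg : DifferentiableAt ℝ g x) :
    pd i (fun y => f y * g y) x = pd i f x * g x + f x * pd i g x := by
  simp only [pd]
  rw [fderiv_fun_mul hf hg]
  simp only [ContinuousLinearMap.add_apply, ContinuousLinearMap.smul_apply, smul_eq_mul]; ring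

theorem pd_sum {m : ℕ} {f : Fin m → Sc n} (hf : ∀ j, DifferentiableAt ℝ (f j) x) :
    pd i (fun y => ∑ j, f j y) x = ∑ j, pd i (f j) x := by
  simp only [pd]
  rw [fderiv_fun_sum (fun j _ => hf j)]
  simp

end PdCalc
/-- Lowered Christoffel symbols. -/
def Γl {n : ℕ} (g : Ten2 n) : Ten3 n := fun x u b c =>
  (1/2) * (pd b (fun y => g y c u) x + pd c (fun y => g y b u) x - pd u (fun y => g y b c) x)

section Main

variable {n : ℕ} {g ginv P Q : Ten2 n}

theorem sum_delta (f : Fin n → ℝ) (b : Fin n) :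
    (∑ c, (if b = c then (1:ℝ) else 0) * f c) = f b := by simp

theorem christg (hgs : ∀ x a b, g x a b = g x b a)
    (hgi : ∀ x a b, (∑ c, g x a c * ginv x c b) = if a = b then (1:ℝ) else 0)
    (x : Pt n) (c a b : Fin n) :
    (∑ r, christoffel g ginv x r a b * g x r c) = Γl g x c a b := by
  simp only [christoffel, Finset.sum_mul, Finset.mul_sum]
  rw [Finset.sum_comm]
  have key : ∀ e, (∑ r, 1/2 * (ginv x r e *
      (pd a (fun y => g y b e) x + pd b (fun y => g y a e) x - pd e (fun y => g y a b) x)) * g x r c)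
      = (if c = e then (1:ℝ) else 0) * ((1/2) *
      (pd a (fun y => g y b e) x + pd b (fun y => g y a e) x - pd e (fun y => g y a b) x)) := by
    intro e
    rw [← hgi x c e, Finset.sum_mul]
    apply Finset.sum_congr rfl
    intro r _
    rw [hgs x r c]
    ring
  rw [Finset.sum_congr rfl (fun e _ => key e), sum_delta]
  rfl

end Main
section Main2

variable {n : ℕ} {g ginv P Q : Ten2 n}

theorem cov2_symm (Γ : Ten3 n) (T : Ten2 n) (hTs : ∀ x a b, T x a b = T x b a)
    (x : Pt n) (a b c : Fin n) : cov2 Γ T x a b c = cov2 Γ T x a c b := by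
  simp only [cov2]
  rw [pd_congr (fun y => hTs y b c),
    Finset.sum_congr rfl (fun r _ => by rw [hTs x r c] : ∀ r ∈ Finset.univ,
      Γ x r a b * T x r c = Γ x r a b * T x c r),
    Finset.sum_congr rfl (fun r _ => by rw [hTs x b r] : ∀ r ∈ Finset.univ,
      Γ x r a c * T x b r = Γ x r a c * T x r b)]
  ring

theorem nablag (hgs : ∀ x a b, g x a b = g x b a)
    (hgi : ∀ x a b, (∑ c, g x a c * ginv x c b) = if a = b then (1:ℝ) else 0)
    (x : Pt n) (a b c : Fin n) : cov2 (christoffel g ginv) g x a b c = 0 := by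
  simp only [cov2]
  rw [christg hgs hgi x c a b,
    Finset.sum_congr rfl (fun r _ => by rw [hgs x b r] : ∀ r ∈ Finset.univ,
      christoffel g ginv x r a c * g x b r = christoffel g ginv x r a c * g x r b),
    christg hgs hgi x b a c]
  simp only [Γl]
  rw [pd_congr (fun y => hgs y b c) (i := a) (x := x)]
  ring

theorem ginvg (hgs : ∀ x a b, g x a b = g x b a)
    (hgis : ∀ x a b, ginv x a b = ginv x b a)
    (hgi : ∀ x a b, (∑ c, g x a c * ginv x c b) = if a = b then (1:ℝ) else 0)
    (x : Pt n) (a b : Fin n) :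
    (∑ c, ginv x a c * g x c b) = if a = b then (1:ℝ) else 0 := by
  rw [Finset.sum_congr rfl (fun c _ => by rw [hgs x c b, hgis x a c]; ring : ∀ c ∈ Finset.univ,
    ginv x a c * g x c b = g x b c * ginv x c a), hgi x b a]
  simp [eq_comm]

theorem diffQ (hPQg : ∀ x a b, P x a b + Q x a b = g x a b)
    (hDg : ∀ a b, Differentiable ℝ (fun x : Pt n => g x a b))
    (hDP : ∀ a b, Differentiable ℝ (fun x : Pt n => P x a b))
    (a b : Fin n) : Differentiable ℝ (fun x : Pt n => Q x a b) := by
  have : (fun x : Pt n => Q x a b) = fun x => g x a b - P x a b := by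
    funext y; rw [← hPQg y a b]; ring
  rw [this]; exact (hDg a b).sub (hDP a b)

theorem pd_ginv (hgs : ∀ x a b, g x a b = g x b a)
    (hgis : ∀ x a b, ginv x a b = ginv x b a)
    (hgi : ∀ x a b, (∑ c, g x a c * ginv x c b) = if a = b then (1:ℝ) else 0)
    (hDg : ∀ a b, Differentiable ℝ (fun x : Pt n => g x a b))
    (hDgi : ∀ a b, Differentiable ℝ (fun x : Pt n => ginv x a b))
    (x : Pt n) (e a b : Fin n) :
    pd e (fun y => ginv y a b) x
      = -∑ c, ∑ r, ginv x a c * pd e (fun y => g y c r) x * ginv x r b := by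
  have hkey : ∀ u v, (∑ c, (pd e (fun y => g y u c) x * ginv x c v
      + g x u c * pd e (fun y => ginv y c v) x)) = 0 := by
    intro u v
    have h1 : pd e (fun y => ∑ c, g y u c * ginv y c v) x = 0 := by
      rw [pd_congr (fun y => hgi y u v)]; exact pd_const _
    rw [← h1, pd_sum (fun c => ((hDg u c) x).fun_mul ((hDgi c v) x))]
    exact Finset.sum_congr rfl (fun c _ =>
      (pd_mul ((hDg u c) x) ((hDgi c v) x)).symm)
  have step : ∀ c, (∑ r, g x c r * pd e (fun y => ginv y r b) x)
      = -∑ r, pd e (fun y => g y c r) x * ginv x r b := by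
    intro c
    have := hkey c b
    have h2 : (∑ r, pd e (fun y => g y c r) x * ginv x r b)
        + (∑ r, g x c r * pd e (fun y => ginv y r b) x) = 0 := by
      rw [← Finset.sum_add_distrib]; exact this
    linarith
  calc pd e (fun y => ginv y a b) x
      = ∑ r, (if a = r then (1:ℝ) else 0) * pd e (fun y => ginv y r b) x := by
        rw [sum_delta]
    _ = ∑ r, (∑ c, ginv x a c * g x c r) * pd e (fun y => ginv y r b) x := by
        exact Finset.sum_congr rfl (fun r _ => by rw [ginvg hgs hgis hgi x a r])
    _ = ∑ c, ginv x a c * (∑ r, g x c r * pd e (fun y => ginv y r b) x) := by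
        simp only [Finset.sum_mul, Finset.mul_sum]
        rw [Finset.sum_comm]
        exact Finset.sum_congr rfl (fun c _ => Finset.sum_congr rfl (fun r _ => by ring))
    _ = ∑ c, ginv x a c * (-∑ r, pd e (fun y => g y c r) x * ginv x r b) := by
        exact Finset.sum_congr rfl (fun c _ => by rw [step c])
    _ = -∑ c, ∑ r, ginv x a c * pd e (fun y => g y c r) x * ginv x r b := by
        rw [← Finset.sum_neg_distrib]
        refine Finset.sum_congr rfl (fun c _ => ?_)
        rw [mul_neg, Finset.mul_sum]
        congr 1
        exact Finset.sum_congr rfl (fun r _ => (mul_assoc _ _ _).symm)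

theorem covQ (hgs : ∀ x a b, g x a b = g x b a)
    (hgi : ∀ x a b, (∑ c, g x a c * ginv x c b) = if a = b then (1:ℝ) else 0)
    (hPQg : ∀ x a b, P x a b + Q x a b = g x a b)
    (hDg : ∀ a b, Differentiable ℝ (fun x : Pt n => g x a b))
    (hDP : ∀ a b, Differentiable ℝ (fun x : Pt n => P x a b))
    (x : Pt n) (a b c : Fin n) :
    cov2 (christoffel g ginv) Q x a b c = - cov2 (christoffel g ginv) P x a b c := by
  have hQ : ∀ y u v, Q y u v = g y u v - P y u v := by
    intro y u v; rw [← hPQg y u v]; ring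
  have : cov2 (christoffel g ginv) Q x a b c
      = cov2 (christoffel g ginv) g x a b c - cov2 (christoffel g ginv) P x a b c := by
    simp only [cov2]
    rw [pd_congr (fun y => hQ y b c),
      pd_sub ((hDg b c) x) ((hDP b c) x)]
    rw [Finset.sum_congr rfl (fun r _ => by rw [hQ x r c]; ring : ∀ r ∈ Finset.univ,
        christoffel g ginv x r a b * Q x r c = christoffel g ginv x r a b * g x r c
          - christoffel g ginv x r a b * P x r c),
      Finset.sum_congr rfl (fun r _ => by rw [hQ x b r]; ring : ∀ r ∈ Finset.univ,
        christoffel g ginv x r a c * Q x b r = christoffel g ginv x r a c * g x b r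
          - christoffel g ginv x r a c * P x b r),
      Finset.sum_sub_distrib, Finset.sum_sub_distrib]
    ring
  rw [this, nablag hgs hgi]
  ring

end Main2
section MatBridge

open Matrix

variable {n : ℕ}

/-- Matrix of a 2-tensor at a point. -/
def mat (A : Ten2 n) (x : Pt n) : Matrix (Fin n) (Fin n) ℝ := Matrix.of fun i j => A x i j

/-- Matrix of partial derivatives of a 2-tensor at a point. -/
def dmat (A : Ten2 n) (x : Pt n) (e : Fin n) : Matrix (Fin n) (Fin n) ℝ :=
  Matrix.of fun i j => pd e (fun y => A y i j) x

/-- Matrix of covariant derivatives `∇_e P_{ab}` at a point, `e` fixed. -/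
def Dmat (g ginv P : Ten2 n) (x : Pt n) (e : Fin n) : Matrix (Fin n) (Fin n) ℝ :=
  Matrix.of fun a b => cov2 (christoffel g ginv) P x e a b

/-- Matrix of Christoffel symbols `Γ^r_{eb}`, `e` fixed. -/
def Cmat (g ginv : Ten2 n) (x : Pt n) (e : Fin n) : Matrix (Fin n) (Fin n) ℝ :=
  Matrix.of fun r b => christoffel g ginv x r e b

/-- Matrix of lowered Christoffel symbols. -/
def Γlmat (g : Ten2 n) (x : Pt n) (e : Fin n) : Matrix (Fin n) (Fin n) ℝ :=
  Matrix.of fun u b => Γl g x u e b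

@[simp] theorem mat_apply (A : Ten2 n) (x : Pt n) (i j : Fin n) : mat A x i j = A x i j := rfl
@[simp] theorem dmat_apply (A : Ten2 n) (x : Pt n) (e i j : Fin n) :
    dmat A x e i j = pd e (fun y => A y i j) x := rfl
@[simp] theorem Dmat_apply (g ginv P : Ten2 n) (x : Pt n) (e i j : Fin n) :
    Dmat g ginv P x e i j = cov2 (christoffel g ginv) P x e i j := rfl
@[simp] theorem Cmat_apply (g ginv : Ten2 n) (x : Pt n) (e i j : Fin n) :
    Cmat g ginv x e i j = christoffel g ginv x i e j := rfl
@[simp] theorem Γlmat_apply (g : Ten2 n) (x : Pt n) (e i j : Fin n) :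
    Γlmat g x e i j = Γl g x i e j := rfl

variable {g ginv P Q : Ten2 n}

theorem mat_symm (hs : ∀ x a b, P x a b = P x b a) (x : Pt n) : (mat P x)ᵀ = mat P x := by
  ext i j; exact hs x j i

theorem gginv_one (hgi : ∀ x a b, (∑ c, g x a c * ginv x c b) = if a = b then (1:ℝ) else 0)
    (x : Pt n) : mat g x * mat ginv x = 1 := by
  ext i j
  rw [Matrix.mul_apply, Matrix.one_apply]
  exact hgi x i j

theorem ginvg_one (hgs : ∀ x a b, g x a b = g x b a) (hgis : ∀ x a b, ginv x a b = ginv x b a)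
    (hgi : ∀ x a b, (∑ c, g x a c * ginv x c b) = if a = b then (1:ℝ) else 0)
    (x : Pt n) : mat ginv x * mat g x = 1 := by
  ext i j
  rw [Matrix.mul_apply, Matrix.one_apply]
  exact ginvg hgs hgis hgi x i j

theorem proj_mat {A B : Ten2 n} {C : Ten2 n}
    (hAB : ∀ x a b, (∑ c, A x a c * mixUp ginv B x c b) = C x a b)
    (x : Pt n) : mat A x * mat ginv x * mat B x = mat C x := by
  ext i j
  rw [Matrix.mul_apply]
  calc (∑ c, (mat A x * mat ginv x) i c * mat B x c j)
      = ∑ c, ∑ d, A x i d * ginv x d c * B x c j := by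
        refine Finset.sum_congr rfl (fun c _ => ?_)
        rw [Matrix.mul_apply, Finset.sum_mul]
        simp only [mat_apply]
    _ = ∑ d, A x i d * mixUp ginv B x d j := by
        rw [Finset.sum_comm]
        refine Finset.sum_congr rfl (fun d _ => ?_)
        rw [mixUp, Finset.mul_sum]
        exact Finset.sum_congr rfl (fun c _ => by ring)
    _ = C x i j := hAB x i j

theorem christ_mat (hgs : ∀ x a b, g x a b = g x b a)
    (hgi : ∀ x a b, (∑ c, g x a c * ginv x c b) = if a = b then (1:ℝ) else 0)
    (x : Pt n) (e : Fin n) : mat g x * Cmat g ginv x e = Γlmat g x e := by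
  ext i j
  rw [Matrix.mul_apply]
  calc (∑ c, mat g x i c * Cmat g ginv x e c j)
      = ∑ c, christoffel g ginv x c e j * g x c i := by
        refine Finset.sum_congr rfl (fun c _ => ?_)
        simp only [mat_apply, Cmat_apply]
        rw [hgs x i c]
        ring
    _ = Γl g x i e j := christg hgs hgi x i e j
  

theorem cmat_eq (hgs : ∀ x a b, g x a b = g x b a) (hgis : ∀ x a b, ginv x a b = ginv x b a)
    (hgi : ∀ x a b, (∑ c, g x a c * ginv x c b) = if a = b then (1:ℝ) else 0)
    (x : Pt n) (e : Fin n) : Cmat g ginv x e = mat ginv x * Γlmat g x e := by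
  rw [← christ_mat hgs hgi x e, ← Matrix.mul_assoc, ginvg_one hgs hgis hgi, Matrix.one_mul]

theorem Γl_dg (hgs : ∀ x a b, g x a b = g x b a) (x : Pt n) (e : Fin n) :
    Γlmat g x e + (Γlmat g x e)ᵀ = dmat g x e := by
  ext i j
  simp only [Matrix.add_apply, Matrix.transpose_apply, Γlmat_apply, dmat_apply, Γl]
  rw [pd_congr (fun y => hgs y j i) (i := e) (x := x)]
  ring

theorem dmat_D (hPs : ∀ x a b, P x a b = P x b a) (x : Pt n) (e : Fin n) :
    Dmat g ginv P x e = dmat P x e - (Cmat g ginv x e)ᵀ * mat P x - mat P x * Cmat g ginv x e := by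
  ext i j
  simp only [Dmat_apply, Matrix.sub_apply, Matrix.mul_apply, Matrix.transpose_apply,
    Cmat_apply, mat_apply, dmat_apply, cov2]
  congr 1
  exact Finset.sum_congr rfl (fun r _ => by ring)

end MatBridge
section MatBridge2

open Matrix

variable {n : ℕ} {g ginv P Q : Ten2 n}

theorem mul3_apply (A B C : Matrix (Fin n) (Fin n) ℝ) (i j : Fin n) :
    (A * B * C) i j = ∑ c, ∑ d, A i c * (B c d * C d j) := by
  rw [Matrix.mul_apply]
  calc (∑ d, (A * B) i d * C d j)
      = ∑ d, ∑ c, A i c * B c d * C d j := by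
        refine Finset.sum_congr rfl (fun d _ => ?_)
        rw [Matrix.mul_apply, Finset.sum_mul]
    _ = ∑ c, ∑ d, A i c * (B c d * C d j) := by
        rw [Finset.sum_comm]
        exact Finset.sum_congr rfl (fun c _ => Finset.sum_congr rfl (fun d _ => by ring))

theorem dginv_mat (hgs : ∀ x a b, g x a b = g x b a) (hgis : ∀ x a b, ginv x a b = ginv x b a)
    (hgi : ∀ x a b, (∑ c, g x a c * ginv x c b) = if a = b then (1:ℝ) else 0)
    (hDg : ∀ a b, Differentiable ℝ (fun x : Pt n => g x a b))
    (hDgi : ∀ a b, Differentiable ℝ (fun x : Pt n => ginv x a b))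
    (x : Pt n) (e : Fin n) :
    dmat ginv x e = -(mat ginv x * dmat g x e * mat ginv x) := by
  ext i j
  simp only [dmat_apply, Matrix.neg_apply]
  rw [pd_ginv hgs hgis hgi hDg hDgi x e i j, mul3_apply]
  congr 1
  exact Finset.sum_congr rfl (fun c _ => Finset.sum_congr rfl (fun d _ => by
    simp only [mat_apply, dmat_apply]; ring))

theorem dPgP (hPP : ∀ x a b, (∑ c, P x a c * mixUp ginv P x c b) = P x a b)
    (hDgi : ∀ a b, Differentiable ℝ (fun x : Pt n => ginv x a b))
    (hDP : ∀ a b, Differentiable ℝ (fun x : Pt n => P x a b))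
    (x : Pt n) (e : Fin n) :
    dmat P x e = dmat P x e * mat ginv x * mat P x + mat P x * dmat ginv x e * mat P x
      + mat P x * mat ginv x * dmat P x e := by
  ext i j
  have hdmix : ∀ c, DifferentiableAt ℝ (fun y => mixUp ginv P y c j) x := by
    intro c
    show DifferentiableAt ℝ (fun y => ∑ d, ginv y c d * P y d j) x
    exact DifferentiableAt.fun_sum (fun d _ => ((hDgi c d) x).fun_mul ((hDP d j) x))
  have h2 : ∀ c, pd e (fun y => mixUp ginv P y c j) x
      = ∑ d, (pd e (fun y => ginv y c d) x * P x d j + ginv x c d * pd e (fun y => P y d j) x) := by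
    intro c
    have : pd e (fun y => mixUp ginv P y c j) x = pd e (fun y => ∑ d, ginv y c d * P y d j) x := rfl
    rw [this, pd_sum (fun d => ((hDgi c d) x).fun_mul ((hDP d j) x))]
    exact Finset.sum_congr rfl (fun d _ => pd_mul ((hDgi c d) x) ((hDP d j) x))
  have h1 : pd e (fun y => P y i j) x
      = ∑ c, (pd e (fun y => P y i c) x * mixUp ginv P x c j
          + P x i c * pd e (fun y => mixUp ginv P y c j) x) := by
    conv_lhs => rw [pd_congr (fun y => (hPP y i j).symm)]
    rw [pd_sum (fun c => ((hDP i c) x).fun_mul (hdmix c))]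
    exact Finset.sum_congr rfl (fun c _ => pd_mul ((hDP i c) x) (hdmix c))
  show pd e (fun y => P y i j) x = _
  rw [h1]
  simp only [Matrix.add_apply, mul3_apply]
  rw [Finset.sum_congr rfl (fun c _ => by rw [h2 c] : ∀ c ∈ Finset.univ,
    (pd e (fun y => P y i c) x * mixUp ginv P x c j + P x i c * pd e (fun y => mixUp ginv P y c j) x)
    = (pd e (fun y => P y i c) x * mixUp ginv P x c j
      + P x i c * ∑ d, (pd e (fun y => ginv y c d) x * P x d j + ginv x c d * pd e (fun y => P y d j) x)))]
  have expand : ∀ c, pd e (fun y => P y i c) x * mixUp ginv P x c j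
      + P x i c * ∑ d, (pd e (fun y => ginv y c d) x * P x d j + ginv x c d * pd e (fun y => P y d j) x)
      = (∑ d, dmat P x e i c * (mat ginv x c d * mat P x d j))
        + ((∑ d, mat P x i c * (dmat ginv x e c d * mat P x d j))
        + (∑ d, mat P x i c * (mat ginv x c d * dmat P x e d j))) := by
    intro c
    simp only [mat_apply, dmat_apply, mixUp, Finset.mul_sum]
    rw [← Finset.sum_add_distrib, ← Finset.sum_add_distrib, ← Finset.sum_add_distrib]
    exact Finset.sum_congr rfl (fun d _ => by ring)
  rw [Finset.sum_congr rfl (fun c _ => expand c), Finset.sum_add_distrib, Finset.sum_add_distrib]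
  ring

end MatBridge2
section Leib

open Matrix

theorem ringlem {R : Type*} [Ring R] (dP dG dGi Γ Γt P Gi : R)
    (hP : P*Gi*P = P) (hΓ : Γ + Γt = dG) (hGi : dGi = -(Gi*dG*Gi))
    (hdP : dP = dP*Gi*P + P*dGi*P + P*Gi*dP) :
    dP - Γt*Gi*P - P*(Gi*Γ)
      = (dP - Γt*Gi*P - P*(Gi*Γ))*Gi*P + P*Gi*(dP - Γt*Gi*P - P*(Gi*Γ)) := by
  have h4 : dP*Gi*P + P*Gi*dP - P*Gi*dG*Gi*P = dP := by
    conv_rhs => rw [hdP, hGi]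
    noncomm_ring
  calc dP - Γt*Gi*P - P*(Gi*Γ)
      = (dP*Gi*P + P*Gi*dP - P*Gi*dG*Gi*P) - Γt*Gi*P - P*(Gi*Γ) := by rw [h4]
    _ = dP*Gi*P + P*Gi*dP - Γt*Gi*(P*Gi*P) - (P*Gi*P)*(Gi*Γ) - P*Gi*((Γ + Γt)*Gi*P) := by
        rw [hP, hΓ]
        noncomm_ring
    _ = (dP - Γt*Gi*P - P*(Gi*Γ))*Gi*P + P*Gi*(dP - Γt*Gi*P - P*(Gi*Γ)) := by
        noncomm_ring

variable {n : ℕ} {g ginv P Q : Ten2 n}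

theorem leibM (hgs : ∀ x a b, g x a b = g x b a) (hgis : ∀ x a b, ginv x a b = ginv x b a)
    (hPs : ∀ x a b, P x a b = P x b a)
    (hgi : ∀ x a b, (∑ c, g x a c * ginv x c b) = if a = b then (1:ℝ) else 0)
    (hPP : ∀ x a b, (∑ c, P x a c * mixUp ginv P x c b) = P x a b)
    (hDg : ∀ a b, Differentiable ℝ (fun x : Pt n => g x a b))
    (hDgi : ∀ a b, Differentiable ℝ (fun x : Pt n => ginv x a b))
    (hDP : ∀ a b, Differentiable ℝ (fun x : Pt n => P x a b))
    (x : Pt n) (e : Fin n) :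
    Dmat g ginv P x e
      = Dmat g ginv P x e * mat ginv x * mat P x + mat P x * mat ginv x * Dmat g ginv P x e := by
  rw [dmat_D hPs x e, cmat_eq hgs hgis hgi x e, Matrix.transpose_mul, mat_symm hgis x]
  exact ringlem (dmat P x e) (dmat g x e) (dmat ginv x e) (Γlmat g x e) (Γlmat g x e)ᵀ
    (mat P x) (mat ginv x) (proj_mat hPP x) (Γl_dg hgs x e)
    (dginv_mat hgs hgis hgi hDg hDgi x e) (dPgP hPP hDgi hDP x e)

end Leib
section TraceLemmas

open Matrix

variable {n : ℕ} {g ginv P Q : Ten2 n}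

theorem matzero {A B : Ten2 n}
    (hAB : ∀ x a b, (∑ c, A x a c * mixUp ginv B x c b) = 0)
    (x : Pt n) : mat A x * mat ginv x * mat B x = 0 := by
  have h := proj_mat (C := fun _ _ _ => (0:ℝ)) (ginv := ginv) (fun x a b => hAB x a b) x
  rw [h]
  ext i j
  rfl

theorem QGiP_zero (hgis : ∀ x a b, ginv x a b = ginv x b a)
    (hPs : ∀ x a b, P x a b = P x b a) (hQs : ∀ x a b, Q x a b = Q x b a)
    (hPQ0 : ∀ x a b, (∑ c, P x a c * mixUp ginv Q x c b) = 0)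
    (x : Pt n) : mat Q x * mat ginv x * mat P x = 0 := by
  have h0 := matzero (A := P) (B := Q) hPQ0 x
  have h2 := congrArg Matrix.transpose h0
  rw [Matrix.transpose_mul, Matrix.transpose_mul, mat_symm hQs x, mat_symm hgis x,
    mat_symm hPs x, Matrix.transpose_zero] at h2
  rw [Matrix.mul_assoc]
  exact h2

theorem GiPN (hPP : ∀ x a b, (∑ c, P x a c * mixUp ginv P x c b) = P x a b) (x : Pt n) :
    mat ginv x * mat P x * (mat ginv x * mat P x * mat ginv x)
      = mat ginv x * mat P x * mat ginv x := by
  have hP := proj_mat hPP x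
  calc mat ginv x * mat P x * (mat ginv x * mat P x * mat ginv x)
      = mat ginv x * (mat P x * mat ginv x * mat P x) * mat ginv x := by noncomm_ring
    _ = mat ginv x * mat P x * mat ginv x := by rw [hP, Matrix.mul_assoc]

theorem NPGi (hPP : ∀ x a b, (∑ c, P x a c * mixUp ginv P x c b) = P x a b) (x : Pt n) :
    (mat ginv x * mat P x * mat ginv x) * mat P x * mat ginv x
      = mat ginv x * mat P x * mat ginv x := by
  have hP := proj_mat hPP x
  calc (mat ginv x * mat P x * mat ginv x) * mat P x * mat ginv x
      = mat ginv x * (mat P x * mat ginv x * mat P x) * mat ginv x := by noncomm_ring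
    _ = mat ginv x * mat P x * mat ginv x := by rw [hP, Matrix.mul_assoc]

theorem GiPNQ (hPQ0 : ∀ x a b, (∑ c, P x a c * mixUp ginv Q x c b) = 0) (x : Pt n) :
    mat ginv x * mat P x * (mat ginv x * mat Q x * mat ginv x) = 0 := by
  have h0 := matzero (A := P) (B := Q) hPQ0 x
  calc mat ginv x * mat P x * (mat ginv x * mat Q x * mat ginv x)
      = mat ginv x * (mat P x * mat ginv x * mat Q x) * mat ginv x := by noncomm_ring
    _ = 0 := by rw [h0]; noncomm_ring

theorem NQPGi (hgis : ∀ x a b, ginv x a b = ginv x b a)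
    (hPs : ∀ x a b, P x a b = P x b a) (hQs : ∀ x a b, Q x a b = Q x b a)
    (hPQ0 : ∀ x a b, (∑ c, P x a c * mixUp ginv Q x c b) = 0)
    (x : Pt n) : (mat ginv x * mat Q x * mat ginv x) * mat P x * mat ginv x = 0 := by
  have h0 := QGiP_zero hgis hPs hQs hPQ0 x
  calc (mat ginv x * mat Q x * mat ginv x) * mat P x * mat ginv x
      = mat ginv x * (mat Q x * mat ginv x * mat P x) * mat ginv x := by noncomm_ring
    _ = 0 := by rw [h0]; noncomm_ring

/-- trace of `D_a * N` vanishes when `Gi*P*N = N` and `N*P*Gi = N`. -/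
theorem traceDN_zero {Da N : Matrix (Fin n) (Fin n) ℝ} {Pm Gi : Matrix (Fin n) (Fin n) ℝ}
    (hleib : Da = Da * Gi * Pm + Pm * Gi * Da)
    (h1 : Gi * Pm * N = N) (h2 : N * Pm * Gi = N) :
    Matrix.trace (Da * N) = 0 := by
  have c1 : Matrix.trace (Da * Gi * Pm * N) = Matrix.trace (Da * N) := by
    rw [show Da * Gi * Pm * N = Da * (Gi * Pm * N) from by noncomm_ring, h1]
  have c2 : Matrix.trace (Pm * Gi * Da * N) = Matrix.trace (Da * N) := by
    rw [show Pm * Gi * Da * N = (Pm * Gi) * (Da * N) from by noncomm_ring,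
      Matrix.trace_mul_comm,
      show (Da * N) * (Pm * Gi) = Da * (N * Pm * Gi) from by noncomm_ring, h2]
  have key : Matrix.trace (Da * N) = Matrix.trace (Da * N) + Matrix.trace (Da * N) := by
    conv_lhs => rw [hleib]
    rw [Matrix.add_mul, Matrix.trace_add, c1, c2]
  linarith

/-- trace of `D_a * NQ` vanishes when `Gi*P*NQ = 0` and `NQ*P*Gi = 0`. -/
theorem traceDNQ_zero {Da NQ : Matrix (Fin n) (Fin n) ℝ} {Pm Gi : Matrix (Fin n) (Fin n) ℝ}
    (hleib : Da = Da * Gi * Pm + Pm * Gi * Da)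
    (h1 : Gi * Pm * NQ = 0) (h2 : NQ * Pm * Gi = 0) :
    Matrix.trace (Da * NQ) = 0 := by
  have c1 : Matrix.trace (Da * Gi * Pm * NQ) = 0 := by
    rw [show Da * Gi * Pm * NQ = Da * (Gi * Pm * NQ) from by noncomm_ring, h1,
      Matrix.mul_zero, Matrix.trace_zero]
  have c2 : Matrix.trace (Pm * Gi * Da * NQ) = 0 := by
    rw [show Pm * Gi * Da * NQ = (Pm * Gi) * (Da * NQ) from by noncomm_ring,
      Matrix.trace_mul_comm,
      show (Da * NQ) * (Pm * Gi) = Da * (NQ * Pm * Gi) from by noncomm_ring, h2,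
      Matrix.mul_zero, Matrix.trace_zero]
  conv_lhs => rw [hleib]
  rw [Matrix.add_mul, Matrix.trace_add, c1, c2, add_zero]

end TraceLemmas
section EW

open Matrix

variable {n : ℕ} {g ginv P Q : Ten2 n}

theorem sum_rot3 {f : Fin n → Fin n → Fin n → ℝ} :
    (∑ s, ∑ t, ∑ c, f s t c) = ∑ c, ∑ s, ∑ t, f s t c := by
  calc (∑ s, ∑ t, ∑ c, f s t c) = ∑ s, ∑ c, ∑ t, f s t c :=
        Finset.sum_congr rfl (fun s _ => Finset.sum_comm)
    _ = ∑ c, ∑ s, ∑ t, f s t c := Finset.sum_comm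

theorem ggi_contract (hgi : ∀ x a b, (∑ c, g x a c * ginv x c b) = if a = b then (1:ℝ) else 0)
    (x : Pt n) (a : Fin n) (f : Fin n → ℝ) :
    (∑ s, ∑ t, g x a s * (ginv x s t * f t)) = f a := by
  calc (∑ s, ∑ t, g x a s * (ginv x s t * f t))
      = ∑ t, (∑ s, g x a s * ginv x s t) * f t := by
        rw [Finset.sum_comm]
        refine Finset.sum_congr rfl (fun t _ => ?_)
        rw [Finset.sum_mul]
        exact Finset.sum_congr rfl (fun s _ => by ring)
    _ = ∑ t, (if a = t then (1:ℝ) else 0) * f t :=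
        Finset.sum_congr rfl (fun t _ => by rw [hgi x a t])
    _ = f a := sum_delta f a

/-- `N` entry formula for `up2`. -/
theorem up2_N (hgis : ∀ x a b, ginv x a b = ginv x b a) (A : Ten2 n) (x : Pt n) (c b : Fin n) :
    up2 ginv A x c b = (mat ginv x * mat A x * mat ginv x) c b := by
  rw [mul3_apply, up2]
  exact Finset.sum_congr rfl (fun u _ => Finset.sum_congr rfl (fun v _ => by
    simp only [mat_apply]
    rw [hgis x b v]
    ring))

theorem N_symm_entry {A : Ten2 n} (hgis : ∀ x a b, ginv x a b = ginv x b a)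
    (hAs : ∀ x a b, A x a b = A x b a) (x : Pt n) (c b : Fin n) :
    (mat ginv x * mat A x * mat ginv x) c b = (mat ginv x * mat A x * mat ginv x) b c := by
  rw [mul3_apply, mul3_apply]
  rw [Finset.sum_comm]
  exact Finset.sum_congr rfl (fun u _ => Finset.sum_congr rfl (fun v _ => by
    simp only [mat_apply]
    rw [hgis x c v, hgis x b u, hAs x u v]
    ring))

theorem Mtens_entry (x : Pt n) (a c b : Fin n) :
    Mtens g ginv P x a c b
      = Dmat g ginv P x c a b + Dmat g ginv P x b a c - Dmat g ginv P x a c b := rfl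

end EW
section EW2

open Matrix

variable {n : ℕ} {g ginv P Q : Ten2 n}

theorem trace_eq_sum (A : Matrix (Fin n) (Fin n) ℝ) : Matrix.trace A = ∑ c, A c c := rfl

theorem E_eq (hgs : ∀ x a b, g x a b = g x b a) (hgis : ∀ x a b, ginv x a b = ginv x b a)
    (hPs : ∀ x a b, P x a b = P x b a)
    (hgi : ∀ x a b, (∑ c, g x a c * ginv x c b) = if a = b then (1:ℝ) else 0)
    (hPP : ∀ x a b, (∑ c, P x a c * mixUp ginv P x c b) = P x a b)
    (hDg : ∀ a b, Differentiable ℝ (fun x : Pt n => g x a b))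
    (hDgi : ∀ a b, Differentiable ℝ (fun x : Pt n => ginv x a b))
    (hDP : ∀ a b, Differentiable ℝ (fun x : Pt n => P x a b))
    (x : Pt n) (a : Fin n) :
    Eform g ginv P x a
      = 2 * ∑ c, (Dmat g ginv P x c * (mat ginv x * mat P x * mat ginv x)) a c := by
  have hNs := fun c b => N_symm_entry (A := P) hgis hPs x c b
  have htr : Matrix.trace (Dmat g ginv P x a * (mat ginv x * mat P x * mat ginv x)) = 0 :=
    traceDN_zero (leibM hgs hgis hPs hgi hPP hDg hDgi hDP x a) (GiPN hPP x) (NPGi hPP x)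
  have S1 : ∀ c, (∑ b, Dmat g ginv P x c a b * (mat ginv x * mat P x * mat ginv x) c b)
      = (Dmat g ginv P x c * (mat ginv x * mat P x * mat ginv x)) a c := by
    intro c
    rw [Matrix.mul_apply]
    exact Finset.sum_congr rfl (fun b _ => by rw [hNs c b])
  have S2 : (∑ c, ∑ b, Dmat g ginv P x b a c * (mat ginv x * mat P x * mat ginv x) c b)
      = ∑ c, (Dmat g ginv P x c * (mat ginv x * mat P x * mat ginv x)) a c := by
    rw [Finset.sum_comm]
    exact Finset.sum_congr rfl (fun b _ => by rw [Matrix.mul_apply])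
  have S3 : (∑ c, ∑ b, Dmat g ginv P x a c b * (mat ginv x * mat P x * mat ginv x) c b)
      = Matrix.trace (Dmat g ginv P x a * (mat ginv x * mat P x * mat ginv x)) := by
    rw [trace_eq_sum]
    refine Finset.sum_congr rfl (fun c _ => ?_)
    rw [Matrix.mul_apply]
    exact Finset.sum_congr rfl (fun b _ => by rw [hNs c b])
  calc Eform g ginv P x a
      = ∑ c, ∑ b, (Dmat g ginv P x c a b + Dmat g ginv P x b a c - Dmat g ginv P x a c b)
          * (mat ginv x * mat P x * mat ginv x) c b := by
        rw [Eform]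
        exact Finset.sum_congr rfl (fun c _ => Finset.sum_congr rfl (fun b _ => by
          rw [up2_N hgis P x c b]; rfl))
    _ = (∑ c, ∑ b, Dmat g ginv P x c a b * (mat ginv x * mat P x * mat ginv x) c b)
        + (∑ c, ∑ b, Dmat g ginv P x b a c * (mat ginv x * mat P x * mat ginv x) c b)
        - ∑ c, ∑ b, Dmat g ginv P x a c b * (mat ginv x * mat P x * mat ginv x) c b := by
        simp only [add_mul, sub_mul, Finset.sum_add_distrib, Finset.sum_sub_distrib]
    _ = 2 * ∑ c, (Dmat g ginv P x c * (mat ginv x * mat P x * mat ginv x)) a c := by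
        rw [Finset.sum_congr rfl (fun c _ => S1 c), S2, S3, htr]
        ring

theorem W_eq (hgs : ∀ x a b, g x a b = g x b a) (hgis : ∀ x a b, ginv x a b = ginv x b a)
    (hPs : ∀ x a b, P x a b = P x b a) (hQs : ∀ x a b, Q x a b = Q x b a)
    (hgi : ∀ x a b, (∑ c, g x a c * ginv x c b) = if a = b then (1:ℝ) else 0)
    (hPP : ∀ x a b, (∑ c, P x a c * mixUp ginv P x c b) = P x a b)
    (hPQ0 : ∀ x a b, (∑ c, P x a c * mixUp ginv Q x c b) = 0)
    (hDg : ∀ a b, Differentiable ℝ (fun x : Pt n => g x a b))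
    (hDgi : ∀ a b, Differentiable ℝ (fun x : Pt n => ginv x a b))
    (hDP : ∀ a b, Differentiable ℝ (fun x : Pt n => P x a b))
    (x : Pt n) (a : Fin n) :
    Wform g ginv P Q x a
      = -(2 * ∑ c, (Dmat g ginv P x c * (mat ginv x * mat Q x * mat ginv x)) a c) := by
  have hNs := fun c b => N_symm_entry (A := Q) hgis hQs x c b
  have htr : Matrix.trace (Dmat g ginv P x a * (mat ginv x * mat Q x * mat ginv x)) = 0 :=
    traceDNQ_zero (leibM hgs hgis hPs hgi hPP hDg hDgi hDP x a) (GiPNQ hPQ0 x)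
      (NQPGi hgis hPs hQs hPQ0 x)
  have S1 : ∀ c, (∑ b, Dmat g ginv P x c a b * (mat ginv x * mat Q x * mat ginv x) c b)
      = (Dmat g ginv P x c * (mat ginv x * mat Q x * mat ginv x)) a c := by
    intro c
    rw [Matrix.mul_apply]
    exact Finset.sum_congr rfl (fun b _ => by rw [hNs c b])
  have S2 : (∑ c, ∑ b, Dmat g ginv P x b a c * (mat ginv x * mat Q x * mat ginv x) c b)
      = ∑ c, (Dmat g ginv P x c * (mat ginv x * mat Q x * mat ginv x)) a c := by
    rw [Finset.sum_comm]
    exact Finset.sum_congr rfl (fun b _ => by rw [Matrix.mul_apply])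
  have S3 : (∑ c, ∑ b, Dmat g ginv P x a c b * (mat ginv x * mat Q x * mat ginv x) c b)
      = Matrix.trace (Dmat g ginv P x a * (mat ginv x * mat Q x * mat ginv x)) := by
    rw [trace_eq_sum]
    refine Finset.sum_congr rfl (fun c _ => ?_)
    rw [Matrix.mul_apply]
    exact Finset.sum_congr rfl (fun b _ => by rw [hNs c b])
  calc Wform g ginv P Q x a
      = -∑ c, ∑ b, (Dmat g ginv P x c a b + Dmat g ginv P x b a c - Dmat g ginv P x a c b)
          * (mat ginv x * mat Q x * mat ginv x) c b := by
        rw [Wform]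
        congr 1
        exact Finset.sum_congr rfl (fun c _ => Finset.sum_congr rfl (fun b _ => by
          rw [up2_N hgis Q x c b]; rfl))
    _ = -((∑ c, ∑ b, Dmat g ginv P x c a b * (mat ginv x * mat Q x * mat ginv x) c b)
        + (∑ c, ∑ b, Dmat g ginv P x b a c * (mat ginv x * mat Q x * mat ginv x) c b)
        - ∑ c, ∑ b, Dmat g ginv P x a c b * (mat ginv x * mat Q x * mat ginv x) c b) := by
        simp only [add_mul, sub_mul, Finset.sum_add_distrib, Finset.sum_sub_distrib]
    _ = -(2 * ∑ c, (Dmat g ginv P x c * (mat ginv x * mat Q x * mat ginv x)) a c) := by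
        rw [Finset.sum_congr rfl (fun c _ => S1 c), S2, S3, htr]
        ring

end EW2
section Orth

open Matrix

variable {n : ℕ} {g ginv P Q : Ten2 n}

theorem PGiDcN_zero (hgs : ∀ x a b, g x a b = g x b a) (hgis : ∀ x a b, ginv x a b = ginv x b a)
    (hPs : ∀ x a b, P x a b = P x b a)
    (hgi : ∀ x a b, (∑ c, g x a c * ginv x c b) = if a = b then (1:ℝ) else 0)
    (hPP : ∀ x a b, (∑ c, P x a c * mixUp ginv P x c b) = P x a b)
    (hDg : ∀ a b, Differentiable ℝ (fun x : Pt n => g x a b))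
    (hDgi : ∀ a b, Differentiable ℝ (fun x : Pt n => ginv x a b))
    (hDP : ∀ a b, Differentiable ℝ (fun x : Pt n => P x a b))
    (x : Pt n) (c : Fin n) :
    mat P x * mat ginv x * Dmat g ginv P x c * (mat ginv x * mat P x * mat ginv x) = 0 := by
  have hl := leibM hgs hgis hPs hgi hPP hDg hDgi hDP x c
  have hB : mat P x * mat ginv x * Dmat g ginv P x c
      = Dmat g ginv P x c - Dmat g ginv P x c * mat ginv x * mat P x := by
    rw [eq_sub_iff_add_eq, add_comm]
    exact hl.symm
  calc mat P x * mat ginv x * Dmat g ginv P x c * (mat ginv x * mat P x * mat ginv x)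
      = (Dmat g ginv P x c - Dmat g ginv P x c * mat ginv x * mat P x)
          * (mat ginv x * mat P x * mat ginv x) := by rw [hB]
    _ = Dmat g ginv P x c * (mat ginv x * mat P x * mat ginv x)
        - Dmat g ginv P x c * (mat ginv x * mat P x * (mat ginv x * mat P x * mat ginv x)) := by
        noncomm_ring
    _ = 0 := by rw [GiPN hPP x]; noncomm_ring

theorem QGiDcNQ_zero (hgs : ∀ x a b, g x a b = g x b a) (hgis : ∀ x a b, ginv x a b = ginv x b a)
    (hPs : ∀ x a b, P x a b = P x b a) (hQs : ∀ x a b, Q x a b = Q x b a)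
    (hgi : ∀ x a b, (∑ c, g x a c * ginv x c b) = if a = b then (1:ℝ) else 0)
    (hPP : ∀ x a b, (∑ c, P x a c * mixUp ginv P x c b) = P x a b)
    (hPQ0 : ∀ x a b, (∑ c, P x a c * mixUp ginv Q x c b) = 0)
    (hDg : ∀ a b, Differentiable ℝ (fun x : Pt n => g x a b))
    (hDgi : ∀ a b, Differentiable ℝ (fun x : Pt n => ginv x a b))
    (hDP : ∀ a b, Differentiable ℝ (fun x : Pt n => P x a b))
    (x : Pt n) (c : Fin n) :
    mat Q x * mat ginv x * Dmat g ginv P x c * (mat ginv x * mat Q x * mat ginv x) = 0 := by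
  have hl := leibM hgs hgis hPs hgi hPP hDg hDgi hDP x c
  have h0 := matzero (A := P) (B := Q) hPQ0 x
  have h1 := QGiP_zero hgis hPs hQs hPQ0 x
  calc mat Q x * mat ginv x * Dmat g ginv P x c * (mat ginv x * mat Q x * mat ginv x)
      = mat Q x * mat ginv x
          * (Dmat g ginv P x c * mat ginv x * mat P x + mat P x * mat ginv x * Dmat g ginv P x c)
          * (mat ginv x * mat Q x * mat ginv x) := by
        conv_lhs => rw [hl]
    _ = mat Q x * mat ginv x * Dmat g ginv P x c * mat ginv x
          * (mat P x * mat ginv x * mat Q x) * mat ginv x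
        + (mat Q x * mat ginv x * mat P x)
          * (mat ginv x * Dmat g ginv P x c * (mat ginv x * mat Q x * mat ginv x)) := by
        noncomm_ring
    _ = 0 := by rw [h0, h1]; noncomm_ring

theorem PgiE (hgs : ∀ x a b, g x a b = g x b a) (hgis : ∀ x a b, ginv x a b = ginv x b a)
    (hPs : ∀ x a b, P x a b = P x b a)
    (hgi : ∀ x a b, (∑ c, g x a c * ginv x c b) = if a = b then (1:ℝ) else 0)
    (hPP : ∀ x a b, (∑ c, P x a c * mixUp ginv P x c b) = P x a b)
    (hDg : ∀ a b, Differentiable ℝ (fun x : Pt n => g x a b))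
    (hDgi : ∀ a b, Differentiable ℝ (fun x : Pt n => ginv x a b))
    (hDP : ∀ a b, Differentiable ℝ (fun x : Pt n => P x a b))
    (x : Pt n) (a : Fin n) :
    (∑ s, ∑ t, P x a s * (ginv x s t * Eform g ginv P x t)) = 0 := by
  have hE := E_eq hgs hgis hPs hgi hPP hDg hDgi hDP x
  calc (∑ s, ∑ t, P x a s * (ginv x s t * Eform g ginv P x t))
      = ∑ s, ∑ t, ∑ c, 2 * (P x a s * (ginv x s t
          * (Dmat g ginv P x c * (mat ginv x * mat P x * mat ginv x)) t c)) := by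
        refine Finset.sum_congr rfl (fun s _ => Finset.sum_congr rfl (fun t _ => ?_))
        rw [hE t]
        simp only [Finset.mul_sum]
        exact Finset.sum_congr rfl (fun c _ => by ring)
    _ = ∑ c, ∑ s, ∑ t, 2 * (P x a s * (ginv x s t
          * (Dmat g ginv P x c * (mat ginv x * mat P x * mat ginv x)) t c)) := sum_rot3
    _ = ∑ c, 2 * ((mat P x * mat ginv x
          * (Dmat g ginv P x c * (mat ginv x * mat P x * mat ginv x))) a c) := by
        refine Finset.sum_congr rfl (fun c _ => ?_)
        rw [mul3_apply, Finset.mul_sum]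
        exact Finset.sum_congr rfl (fun s _ => by
          rw [Finset.mul_sum]
          exact Finset.sum_congr rfl (fun t _ => by simp only [mat_apply]))
    _ = 0 := by
        refine Finset.sum_eq_zero (fun c _ => ?_)
        rw [show mat P x * mat ginv x * (Dmat g ginv P x c * (mat ginv x * mat P x * mat ginv x))
            = mat P x * mat ginv x * Dmat g ginv P x c * (mat ginv x * mat P x * mat ginv x)
          from by noncomm_ring, PGiDcN_zero hgs hgis hPs hgi hPP hDg hDgi hDP x c]
        simp

theorem QgiW (hgs : ∀ x a b, g x a b = g x b a) (hgis : ∀ x a b, ginv x a b = ginv x b a)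
    (hPs : ∀ x a b, P x a b = P x b a) (hQs : ∀ x a b, Q x a b = Q x b a)
    (hgi : ∀ x a b, (∑ c, g x a c * ginv x c b) = if a = b then (1:ℝ) else 0)
    (hPP : ∀ x a b, (∑ c, P x a c * mixUp ginv P x c b) = P x a b)
    (hPQ0 : ∀ x a b, (∑ c, P x a c * mixUp ginv Q x c b) = 0)
    (hDg : ∀ a b, Differentiable ℝ (fun x : Pt n => g x a b))
    (hDgi : ∀ a b, Differentiable ℝ (fun x : Pt n => ginv x a b))
    (hDP : ∀ a b, Differentiable ℝ (fun x : Pt n => P x a b))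
    (x : Pt n) (a : Fin n) :
    (∑ s, ∑ t, Q x a s * (ginv x s t * Wform g ginv P Q x t)) = 0 := by
  have hW := W_eq hgs hgis hPs hQs hgi hPP hPQ0 hDg hDgi hDP x
  calc (∑ s, ∑ t, Q x a s * (ginv x s t * Wform g ginv P Q x t))
      = ∑ s, ∑ t, ∑ c, -2 * (Q x a s * (ginv x s t
          * (Dmat g ginv P x c * (mat ginv x * mat Q x * mat ginv x)) t c)) := by
        refine Finset.sum_congr rfl (fun s _ => Finset.sum_congr rfl (fun t _ => ?_))
        rw [hW t]
        have h1 : Q x a s * (ginv x s t * ∑ c, (Dmat g ginv P x c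
            * (mat ginv x * mat Q x * mat ginv x)) t c) = ∑ c, Q x a s * (ginv x s t
            * (Dmat g ginv P x c * (mat ginv x * mat Q x * mat ginv x)) t c) := by
          rw [Finset.mul_sum, Finset.mul_sum]
        calc Q x a s * (ginv x s t * -(2 * ∑ c, (Dmat g ginv P x c
            * (mat ginv x * mat Q x * mat ginv x)) t c))
            = -2 * (Q x a s * (ginv x s t * ∑ c, (Dmat g ginv P x c
            * (mat ginv x * mat Q x * mat ginv x)) t c)) := by ring
          _ = -2 * ∑ c, Q x a s * (ginv x s t
            * (Dmat g ginv P x c * (mat ginv x * mat Q x * mat ginv x)) t c) := by rw [h1]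
          _ = ∑ c, -2 * (Q x a s * (ginv x s t
            * (Dmat g ginv P x c * (mat ginv x * mat Q x * mat ginv x)) t c)) := by
            rw [Finset.mul_sum]
    _ = ∑ c, ∑ s, ∑ t, -2 * (Q x a s * (ginv x s t
          * (Dmat g ginv P x c * (mat ginv x * mat Q x * mat ginv x)) t c)) := sum_rot3
    _ = ∑ c, -2 * ((mat Q x * mat ginv x
          * (Dmat g ginv P x c * (mat ginv x * mat Q x * mat ginv x))) a c) := by
        refine Finset.sum_congr rfl (fun c _ => ?_)
        rw [mul3_apply, Finset.mul_sum]
        exact Finset.sum_congr rfl (fun s _ => by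
          rw [Finset.mul_sum]
          exact Finset.sum_congr rfl (fun t _ => by simp only [mat_apply]))
    _ = 0 := by
        refine Finset.sum_eq_zero (fun c _ => ?_)
        rw [show mat Q x * mat ginv x * (Dmat g ginv P x c * (mat ginv x * mat Q x * mat ginv x))
            = mat Q x * mat ginv x * Dmat g ginv P x c * (mat ginv x * mat Q x * mat ginv x)
          from by noncomm_ring, QGiDcNQ_zero hgs hgis hPs hQs hgi hPP hPQ0 hDg hDgi hDP x c]
        simp

end Orth
section Lcon

open Matrix

variable {n : ℕ} {g ginv P Q : Ten2 n}

theorem mix_contract {A B : Ten2 n} (hBs : ∀ x a b, B x a b = B x b a) (x : Pt n) (b c : Fin n) :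
    (∑ r, mixUp ginv A x r b * B x r c)
      = (mat B x * mat ginv x * mat A x) c b := by
  rw [mul3_apply]
  refine Finset.sum_congr rfl (fun r _ => ?_)
  rw [show mixUp ginv A x r b = ∑ u, ginv x r u * A x u b from rfl, Finset.sum_mul]
  refine Finset.sum_congr rfl (fun u _ => ?_)
  simp only [mat_apply]
  rw [hBs x r c]
  ring

theorem conP1 (hPs : ∀ x a b, P x a b = P x b a)
    (hPP : ∀ x a b, (∑ c, P x a c * mixUp ginv P x c b) = P x a b)
    (x : Pt n) (b c : Fin n) : (∑ r, mixUp ginv P x r b * P x r c) = P x b c := by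
  rw [mix_contract hPs x b c, proj_mat hPP x]
  exact hPs x c b

theorem conP2 (hPs : ∀ x a b, P x a b = P x b a)
    (hPQ0 : ∀ x a b, (∑ c, P x a c * mixUp ginv Q x c b) = 0)
    (x : Pt n) (b c : Fin n) : (∑ r, mixUp ginv Q x r b * P x r c) = 0 := by
  rw [mix_contract hPs x b c, matzero (A := P) (B := Q) hPQ0 x]
  rfl

theorem conQ1 (hQs : ∀ x a b, Q x a b = Q x b a)
    (hQQ : ∀ x a b, (∑ c, Q x a c * mixUp ginv Q x c b) = Q x a b)
    (x : Pt n) (b c : Fin n) : (∑ r, mixUp ginv Q x r b * Q x r c) = Q x b c := by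
  rw [mix_contract hQs x b c, proj_mat hQQ x]
  exact hQs x c b

theorem conQ2 (hgis : ∀ x a b, ginv x a b = ginv x b a)
    (hPs : ∀ x a b, P x a b = P x b a) (hQs : ∀ x a b, Q x a b = Q x b a)
    (hPQ0 : ∀ x a b, (∑ c, P x a c * mixUp ginv Q x c b) = 0)
    (x : Pt n) (b c : Fin n) : (∑ r, mixUp ginv P x r b * Q x r c) = 0 := by
  rw [mix_contract hQs x b c, QGiP_zero hgis hPs hQs hPQ0 x]
  rfl

theorem pull_two (c e1 e2 : ℝ) (X Y Z : Fin n → ℝ) :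
    (∑ r, (c * (e1 * X r + e2 * Y r)) * Z r)
      = c * (e1 * (∑ r, X r * Z r) + e2 * ∑ r, Y r * Z r) := by
  rw [Finset.mul_sum, Finset.mul_sum, ← Finset.sum_add_distrib, Finset.mul_sum]
  exact Finset.sum_congr rfl (fun r _ => by ring)

/-- Contraction of the difference tensor with `P`. -/
theorem Lcon_P (hgis : ∀ x a b, ginv x a b = ginv x b a)
    (hPs : ∀ x a b, P x a b = P x b a) (hQs : ∀ x a b, Q x a b = Q x b a)
    (hPP : ∀ x a b, (∑ c, P x a c * mixUp ginv P x c b) = P x a b)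
    (hPQ0 : ∀ x a b, (∑ c, P x a c * mixUp ginv Q x c b) = 0)
    (p : ℝ) (x : Pt n) (a b c : Fin n) :
    (∑ r, Ltens p g ginv P Q x r a b * P x r c)
      = (1/(2*p)) * (Eform g ginv P x a * P x b c + Eform g ginv P x b * P x a c)
        + (1/2) * ∑ s, ∑ t, P x c s * (ginv x s t * Mtens g ginv P x t a b) := by
  have split : ∀ r, Ltens p g ginv P Q x r a b * P x r c
      = ((1/(2*p)) * (Eform g ginv P x a * mixUp ginv P x r b
            + Eform g ginv P x b * mixUp ginv P x r a)) * P x r c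
        + ((1/(2*((n:ℝ)-p))) * (Wform g ginv P Q x a * mixUp ginv Q x r b
            + Wform g ginv P Q x b * mixUp ginv Q x r a)) * P x r c
        + ((1/2) * ∑ s, (mixUp ginv P x r s - mixUp ginv Q x r s)
            * (∑ t, ginv x s t * Mtens g ginv P x t a b)) * P x r c := by
    intro r
    simp only [Ltens]
    ring
  rw [Finset.sum_congr rfl (fun r _ => split r), Finset.sum_add_distrib,
    Finset.sum_add_distrib, pull_two, pull_two,
    conP1 hPs hPP x b c, conP1 hPs hPP x a c, conP2 hPs hPQ0 x b c, conP2 hPs hPQ0 x a c]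
  have pull_third : ∀ (K Z : Fin n → ℝ) (F : Fin n → Fin n → ℝ),
      (∑ r, ((1/2) * ∑ s, F r s * K s) * Z r) = (1/2) * ∑ s, (∑ r, F r s * Z r) * K s := by
    intro K Z F
    calc (∑ r, ((1/2) * ∑ s, F r s * K s) * Z r)
        = ∑ r, ∑ s, (1/2) * (F r s * Z r * K s) := by
          refine Finset.sum_congr rfl (fun r _ => ?_)
          rw [Finset.mul_sum, Finset.sum_mul]
          exact Finset.sum_congr rfl (fun s _ => by ring)
      _ = ∑ s, ∑ r, (1/2) * (F r s * Z r * K s) := Finset.sum_comm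
      _ = (1/2) * ∑ s, (∑ r, F r s * Z r) * K s := by
          rw [Finset.mul_sum]
          refine Finset.sum_congr rfl (fun s _ => ?_)
          rw [Finset.sum_mul, Finset.mul_sum]
  have third : (∑ r, ((1/2) * ∑ s, (mixUp ginv P x r s - mixUp ginv Q x r s)
        * (∑ t, ginv x s t * Mtens g ginv P x t a b)) * P x r c)
      = (1/2) * ∑ s, ∑ t, P x c s * (ginv x s t * Mtens g ginv P x t a b) := by
    rw [pull_third (fun s => ∑ t, ginv x s t * Mtens g ginv P x t a b) (fun r => P x r c)
      (fun r s => mixUp ginv P x r s - mixUp ginv Q x r s)]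
    congr 1
    refine Finset.sum_congr rfl (fun s _ => ?_)
    have hin : (∑ r, (mixUp ginv P x r s - mixUp ginv Q x r s) * P x r c) = P x s c := by
      rw [Finset.sum_congr rfl (fun r _ => sub_mul _ _ _), Finset.sum_sub_distrib,
        conP1 hPs hPP x s c, conP2 hPs hPQ0 x s c, sub_zero]
    rw [hin, hPs x s c, Finset.mul_sum]
  rw [third]
  ring

end Lcon
section Lcon2

open Matrix

variable {n : ℕ} {g ginv P Q : Ten2 n}

/-- Contraction of the difference tensor with `Q`. -/
theorem Lcon_Q (hgis : ∀ x a b, ginv x a b = ginv x b a)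
    (hPs : ∀ x a b, P x a b = P x b a) (hQs : ∀ x a b, Q x a b = Q x b a)
    (hQQ : ∀ x a b, (∑ c, Q x a c * mixUp ginv Q x c b) = Q x a b)
    (hPQ0 : ∀ x a b, (∑ c, P x a c * mixUp ginv Q x c b) = 0)
    (p : ℝ) (x : Pt n) (a b c : Fin n) :
    (∑ r, Ltens p g ginv P Q x r a b * Q x r c)
      = (1/(2*((n:ℝ)-p))) * (Wform g ginv P Q x a * Q x b c + Wform g ginv P Q x b * Q x a c)
        - (1/2) * ∑ s, ∑ t, Q x c s * (ginv x s t * Mtens g ginv P x t a b) := by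
  have split : ∀ r, Ltens p g ginv P Q x r a b * Q x r c
      = ((1/(2*p)) * (Eform g ginv P x a * mixUp ginv P x r b
            + Eform g ginv P x b * mixUp ginv P x r a)) * Q x r c
        + ((1/(2*((n:ℝ)-p))) * (Wform g ginv P Q x a * mixUp ginv Q x r b
            + Wform g ginv P Q x b * mixUp ginv Q x r a)) * Q x r c
        + ((1/2) * ∑ s, (mixUp ginv P x r s - mixUp ginv Q x r s)
            * (∑ t, ginv x s t * Mtens g ginv P x t a b)) * Q x r c := by
    intro r
    simp only [Ltens]
    ring
  have pull_third : ∀ (K Z : Fin n → ℝ) (F : Fin n → Fin n → ℝ),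
      (∑ r, ((1/2) * ∑ s, F r s * K s) * Z r) = (1/2) * ∑ s, (∑ r, F r s * Z r) * K s := by
    intro K Z F
    calc (∑ r, ((1/2) * ∑ s, F r s * K s) * Z r)
        = ∑ r, ∑ s, (1/2) * (F r s * Z r * K s) := by
          refine Finset.sum_congr rfl (fun r _ => ?_)
          rw [Finset.mul_sum, Finset.sum_mul]
          exact Finset.sum_congr rfl (fun s _ => by ring)
      _ = ∑ s, ∑ r, (1/2) * (F r s * Z r * K s) := Finset.sum_comm
      _ = (1/2) * ∑ s, (∑ r, F r s * Z r) * K s := by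
          rw [Finset.mul_sum]
          refine Finset.sum_congr rfl (fun s _ => ?_)
          rw [Finset.sum_mul, Finset.mul_sum]
  rw [Finset.sum_congr rfl (fun r _ => split r), Finset.sum_add_distrib,
    Finset.sum_add_distrib, pull_two, pull_two,
    conQ2 hgis hPs hQs hPQ0 x b c, conQ2 hgis hPs hQs hPQ0 x a c,
    conQ1 hQs hQQ x b c, conQ1 hQs hQQ x a c]
  have third : (∑ r, ((1/2) * ∑ s, (mixUp ginv P x r s - mixUp ginv Q x r s)
        * (∑ t, ginv x s t * Mtens g ginv P x t a b)) * Q x r c)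
      = -((1/2) * ∑ s, ∑ t, Q x c s * (ginv x s t * Mtens g ginv P x t a b)) := by
    rw [pull_third (fun s => ∑ t, ginv x s t * Mtens g ginv P x t a b) (fun r => Q x r c)
      (fun r s => mixUp ginv P x r s - mixUp ginv Q x r s)]
    have hin : ∀ s, (∑ r, (mixUp ginv P x r s - mixUp ginv Q x r s) * Q x r c) = -Q x s c := by
      intro s
      rw [Finset.sum_congr rfl (fun r _ => sub_mul _ _ _), Finset.sum_sub_distrib,
        conQ2 hgis hPs hQs hPQ0 x s c, conQ1 hQs hQQ x s c, zero_sub]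
    rw [Finset.sum_congr rfl (fun s _ => by rw [hin s] : ∀ s ∈ Finset.univ,
      (∑ r, (mixUp ginv P x r s - mixUp ginv Q x r s) * Q x r c)
        * (∑ t, ginv x s t * Mtens g ginv P x t a b)
      = (-Q x s c) * (∑ t, ginv x s t * Mtens g ginv P x t a b))]
    have : ∀ s, (-Q x s c) * (∑ t, ginv x s t * Mtens g ginv P x t a b)
        = -∑ t, Q x c s * (ginv x s t * Mtens g ginv P x t a b) := by
      intro s
      rw [hQs x s c, neg_mul, Finset.mul_sum]
    rw [Finset.sum_congr rfl (fun s _ => this s), Finset.sum_neg_distrib]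
    ring
  rw [third]
  ring

end Lcon2
section Assemble

open Matrix

/-- The tensor `U_{abc}`. -/
def Ut {n : ℕ} (p : ℝ) (g ginv P Q : Ten2 n) : Ten3 n := fun x a b c =>
  (∑ s, ∑ t, Q x a s * (ginv x s t * Mtens g ginv P x t b c))
    - (1/p) * Eform g ginv P x a * P x b c

/-- The tensor `V_{abc}`. -/
def Vt {n : ℕ} (p : ℝ) (g ginv P Q : Ten2 n) : Ten3 n := fun x a b c =>
  (∑ s, ∑ t, P x a s * (ginv x s t * Mtens g ginv P x t b c))
    + (1/((n:ℝ)-p)) * Wform g ginv P Q x a * Q x b c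

variable {n : ℕ} {g ginv P Q : Ten2 n}

theorem Msym (hPs : ∀ x a b, P x a b = P x b a) (x : Pt n) (a b c : Fin n) :
    Mtens g ginv P x a b c = Mtens g ginv P x a c b := by
  simp only [Mtens]
  rw [cov2_symm (christoffel g ginv) P hPs x a b c]
  ring

theorem M_eq (hPs : ∀ x a b, P x a b = P x b a) (x : Pt n) (a b c : Fin n) :
    cov2 (christoffel g ginv) P x a b c
      = (1/2) * (Mtens g ginv P x b a c + Mtens g ginv P x c a b) := by
  have h1 := cov2_symm (christoffel g ginv) P hPs x a b c
  have h2 := cov2_symm (christoffel g ginv) P hPs x c b a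
  have h3 := cov2_symm (christoffel g ginv) P hPs x b c a
  simp only [Mtens]
  linarith

theorem Tsym (hPs : ∀ x a b, P x a b = P x b a) (hQs : ∀ x a b, Q x a b = Q x b a)
    (p : ℝ) (x : Pt n) (a b c : Fin n) :
    Ttens p g ginv P Q x a b c = Ttens p g ginv P Q x a c b := by
  simp only [Ttens]
  rw [Msym hPs x a b c, hPs x b c, hQs x b c]

theorem PMQM (hgi : ∀ x a b, (∑ c, g x a c * ginv x c b) = if a = b then (1:ℝ) else 0)
    (hPQg : ∀ x a b, P x a b + Q x a b = g x a b)
    (x : Pt n) (a b c : Fin n) :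
    (∑ s, ∑ t, P x a s * (ginv x s t * Mtens g ginv P x t b c))
      + (∑ s, ∑ t, Q x a s * (ginv x s t * Mtens g ginv P x t b c))
      = Mtens g ginv P x a b c := by
  calc (∑ s, ∑ t, P x a s * (ginv x s t * Mtens g ginv P x t b c))
      + (∑ s, ∑ t, Q x a s * (ginv x s t * Mtens g ginv P x t b c))
      = ∑ s, ∑ t, g x a s * (ginv x s t * Mtens g ginv P x t b c) := by
        rw [← Finset.sum_add_distrib]
        refine Finset.sum_congr rfl (fun s _ => ?_)
        rw [← Finset.sum_add_distrib]
        refine Finset.sum_congr rfl (fun t _ => ?_)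
        rw [← hPQg x a s]
        ring
    _ = Mtens g ginv P x a b c := ggi_contract hgi x a (fun t => Mtens g ginv P x t b c)

theorem cov2_biconn (p : ℝ) (T : Ten2 n) (x : Pt n) (a b c : Fin n) :
    cov2 (biconn p g ginv P Q) T x a b c
      = cov2 (christoffel g ginv) T x a b c
        - (∑ r, Ltens p g ginv P Q x r a b * T x r c)
        - ∑ r, Ltens p g ginv P Q x r a c * T x b r := by
  simp only [cov2, biconn]
  rw [Finset.sum_congr rfl (fun r _ => add_mul (christoffel g ginv x r a b)
      (Ltens p g ginv P Q x r a b) (T x r c)),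
    Finset.sum_congr rfl (fun r _ => add_mul (christoffel g ginv x r a c)
      (Ltens p g ginv P Q x r a c) (T x b r)),
    Finset.sum_add_distrib, Finset.sum_add_distrib]
  ring

theorem covbar_P (hgis : ∀ x a b, ginv x a b = ginv x b a)
    (hPs : ∀ x a b, P x a b = P x b a) (hQs : ∀ x a b, Q x a b = Q x b a)
    (hgi : ∀ x a b, (∑ c, g x a c * ginv x c b) = if a = b then (1:ℝ) else 0)
    (hPQg : ∀ x a b, P x a b + Q x a b = g x a b)
    (hPP : ∀ x a b, (∑ c, P x a c * mixUp ginv P x c b) = P x a b)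
    (hPQ0 : ∀ x a b, (∑ c, P x a c * mixUp ginv Q x c b) = 0)
    (p : ℝ) (x : Pt n) (a b c : Fin n) :
    cov2 (biconn p g ginv P Q) P x a b c
      = -((1/p) * Eform g ginv P x a * P x b c)
        + (1/2) * (Ut p g ginv P Q x b a c + Ut p g ginv P Q x c a b) := by
  have h2 : (∑ r, Ltens p g ginv P Q x r a c * P x b r)
      = (∑ r, Ltens p g ginv P Q x r a c * P x r b) :=
    Finset.sum_congr rfl (fun r _ => by rw [hPs x b r])
  have hM : ∀ u v w : Fin n, Mtens g ginv P x u v w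
      = (∑ s, ∑ t, P x u s * (ginv x s t * Mtens g ginv P x t v w))
        + (∑ s, ∑ t, Q x u s * (ginv x s t * Mtens g ginv P x t v w)) :=
    fun u v w => (PMQM hgi hPQg x u v w).symm
  rw [cov2_biconn, M_eq hPs x a b c, h2, Lcon_P hgis hPs hQs hPP hPQ0 p x a b c,
    Lcon_P hgis hPs hQs hPP hPQ0 p x a c b, hM b a c, hM c a b]
  simp only [Ut]
  rw [hPs x c b]
  have hc : (1:ℝ)/(2*p) = (1/2)*(1/p) := by
    rw [one_div, mul_inv]
    ring
  rw [hc]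
  ring

theorem covbar_Q (hgs : ∀ x a b, g x a b = g x b a) (hgis : ∀ x a b, ginv x a b = ginv x b a)
    (hPs : ∀ x a b, P x a b = P x b a) (hQs : ∀ x a b, Q x a b = Q x b a)
    (hgi : ∀ x a b, (∑ c, g x a c * ginv x c b) = if a = b then (1:ℝ) else 0)
    (hPQg : ∀ x a b, P x a b + Q x a b = g x a b)
    (hQQ : ∀ x a b, (∑ c, Q x a c * mixUp ginv Q x c b) = Q x a b)
    (hPQ0 : ∀ x a b, (∑ c, P x a c * mixUp ginv Q x c b) = 0)
    (hDg : ∀ a b, Differentiable ℝ (fun x : Pt n => g x a b))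
    (hDP : ∀ a b, Differentiable ℝ (fun x : Pt n => P x a b))
    (p : ℝ) (x : Pt n) (a b c : Fin n) :
    cov2 (biconn p g ginv P Q) Q x a b c
      = -((1/((n:ℝ)-p)) * Wform g ginv P Q x a * Q x b c)
        - (1/2) * (Vt p g ginv P Q x b a c + Vt p g ginv P Q x c a b) := by
  have h2 : (∑ r, Ltens p g ginv P Q x r a c * Q x b r)
      = (∑ r, Ltens p g ginv P Q x r a c * Q x r b) :=
    Finset.sum_congr rfl (fun r _ => by rw [hQs x b r])
  have hM : ∀ u v w : Fin n, Mtens g ginv P x u v w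
      = (∑ s, ∑ t, P x u s * (ginv x s t * Mtens g ginv P x t v w))
        + (∑ s, ∑ t, Q x u s * (ginv x s t * Mtens g ginv P x t v w)) :=
    fun u v w => (PMQM hgi hPQg x u v w).symm
  rw [cov2_biconn, covQ hgs hgi hPQg hDg hDP x a b c, M_eq hPs x a b c, h2,
    Lcon_Q hgis hPs hQs hQQ hPQ0 p x a b c, Lcon_Q hgis hPs hQs hQQ hPQ0 p x a c b,
    hM b a c, hM c a b]
  simp only [Vt]
  rw [hQs x c b]
  have hc : (1:ℝ)/(2*((n:ℝ)-p)) = (1/2)*(1/((n:ℝ)-p)) := by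
    rw [one_div, mul_inv]
    ring
  rw [hc]
  ring

theorem T_eq_UV (hgi : ∀ x a b, (∑ c, g x a c * ginv x c b) = if a = b then (1:ℝ) else 0)
    (hPQg : ∀ x a b, P x a b + Q x a b = g x a b)
    (p : ℝ) (x : Pt n) (a b c : Fin n) :
    Ttens p g ginv P Q x a b c = Ut p g ginv P Q x a b c + Vt p g ginv P Q x a b c := by
  simp only [Ttens, Ut, Vt]
  rw [← PMQM hgi hPQg x a b c]
  ring

theorem QgiE_full (hgs : ∀ x a b, g x a b = g x b a) (hgis : ∀ x a b, ginv x a b = ginv x b a)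
    (hPs : ∀ x a b, P x a b = P x b a)
    (hgi : ∀ x a b, (∑ c, g x a c * ginv x c b) = if a = b then (1:ℝ) else 0)
    (hPQg : ∀ x a b, P x a b + Q x a b = g x a b)
    (hPP : ∀ x a b, (∑ c, P x a c * mixUp ginv P x c b) = P x a b)
    (hDg : ∀ a b, Differentiable ℝ (fun x : Pt n => g x a b))
    (hDgi : ∀ a b, Differentiable ℝ (fun x : Pt n => ginv x a b))
    (hDP : ∀ a b, Differentiable ℝ (fun x : Pt n => P x a b))
    (x : Pt n) (a : Fin n) :
    (∑ s, ∑ t, Q x a s * (ginv x s t * Eform g ginv P x t)) = Eform g ginv P x a := by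
  have step : ∀ s t : Fin n, Q x a s * (ginv x s t * Eform g ginv P x t)
      = g x a s * (ginv x s t * Eform g ginv P x t)
        - P x a s * (ginv x s t * Eform g ginv P x t) := by
    intro s t
    rw [← hPQg x a s]
    ring
  rw [Finset.sum_congr rfl (fun s _ => Finset.sum_congr rfl (fun t _ => step s t)),
    Finset.sum_congr rfl (fun s _ => Finset.sum_sub_distrib _ _), Finset.sum_sub_distrib,
    ggi_contract hgi x a (fun t => Eform g ginv P x t),
    PgiE hgs hgis hPs hgi hPP hDg hDgi hDP x a, sub_zero]

theorem PgiW_full (hgs : ∀ x a b, g x a b = g x b a) (hgis : ∀ x a b, ginv x a b = ginv x b a)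
    (hPs : ∀ x a b, P x a b = P x b a) (hQs : ∀ x a b, Q x a b = Q x b a)
    (hgi : ∀ x a b, (∑ c, g x a c * ginv x c b) = if a = b then (1:ℝ) else 0)
    (hPQg : ∀ x a b, P x a b + Q x a b = g x a b)
    (hPP : ∀ x a b, (∑ c, P x a c * mixUp ginv P x c b) = P x a b)
    (hPQ0 : ∀ x a b, (∑ c, P x a c * mixUp ginv Q x c b) = 0)
    (hDg : ∀ a b, Differentiable ℝ (fun x : Pt n => g x a b))
    (hDgi : ∀ a b, Differentiable ℝ (fun x : Pt n => ginv x a b))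
    (hDP : ∀ a b, Differentiable ℝ (fun x : Pt n => P x a b))
    (x : Pt n) (a : Fin n) :
    (∑ s, ∑ t, P x a s * (ginv x s t * Wform g ginv P Q x t)) = Wform g ginv P Q x a := by
  have step : ∀ s t : Fin n, P x a s * (ginv x s t * Wform g ginv P Q x t)
      = g x a s * (ginv x s t * Wform g ginv P Q x t)
        - Q x a s * (ginv x s t * Wform g ginv P Q x t) := by
    intro s t
    rw [← hPQg x a s]
    ring
  rw [Finset.sum_congr rfl (fun s _ => Finset.sum_congr rfl (fun t _ => step s t)),
    Finset.sum_congr rfl (fun s _ => Finset.sum_sub_distrib _ _), Finset.sum_sub_distrib,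
    ggi_contract hgi x a (fun t => Wform g ginv P Q x t),
    QgiW hgs hgis hPs hQs hgi hPP hPQ0 hDg hDgi hDP x a, sub_zero]

end Assemble

/-- `T_{abc} = 0` identically if and only if
`∇̄_a P_{bc} = -(1/p) E_a P_{bc}` and `∇̄_a Π_{bc} = -(1/(n-p)) W_a Π_{bc}`, for the
bi-conformal connection `∇̄`. -/
theorem stmt_14 {n : ℕ} (g ginv P Q : Ten2 n) (h : ProjectorSetup g ginv P Q)
    (p : ℕ) (hp0 : 0 < p) (hpn : p < n)
    (htr : ∀ x, (∑ a, mixUp ginv P x a a) = (p : ℝ)) :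
    (∀ x a b c, Ttens (p : ℝ) g ginv P Q x a b c = 0)
    ↔ ((∀ x a b c, cov2 (biconn (p : ℝ) g ginv P Q) P x a b c
          = -(1/(p : ℝ)) * Eform g ginv P x a * P x b c)
       ∧ (∀ x a b c, cov2 (biconn (p : ℝ) g ginv P Q) Q x a b c
          = -(1/((n : ℝ) - (p : ℝ))) * Wform g ginv P Q x a * Q x b c)) := by
  obtain ⟨hCg, hCgi, hCP, hgs, hgis, hPs, hQs, hgi, hPQg, hPP, hQQ, hPQ0⟩ := h
  have hDg : ∀ a b, Differentiable ℝ (fun x : Pt n => g x a b) :=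
    fun a b => (hCg a b).differentiable (by simp)
  have hDgi : ∀ a b, Differentiable ℝ (fun x : Pt n => ginv x a b) :=
    fun a b => (hCgi a b).differentiable (by simp)
  have hDP : ∀ a b, Differentiable ℝ (fun x : Pt n => P x a b) :=
    fun a b => (hCP a b).differentiable (by simp)
  have pullc : ∀ (c1 c2 : ℝ) (F : Fin n → Fin n → ℝ),
      (∑ s, ∑ t, c1 * F s t * c2) = c1 * (∑ s, ∑ t, F s t) * c2 := by
    intro c1 c2 F
    rw [Finset.mul_sum, Finset.sum_mul]
    refine Finset.sum_congr rfl (fun s _ => ?_)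
    rw [Finset.mul_sum, Finset.sum_mul]
  constructor
  · intro hT
    have hM0 : ∀ x a b c, Mtens g ginv P x a b c
        = (1/(p:ℝ)) * Eform g ginv P x a * P x b c
          - (1/((n:ℝ)-(p:ℝ))) * Wform g ginv P Q x a * Q x b c := by
      intro x a b c
      have := hT x a b c
      simp only [Ttens] at this
      linarith
    have hU : ∀ x a b c, Ut (p:ℝ) g ginv P Q x a b c = 0 := by
      intro x a b c
      simp only [Ut]
      have e1 : (∑ s, ∑ t, Q x a s * (ginv x s t * Mtens g ginv P x t b c))
          = (1/(p:ℝ)) * (∑ s, ∑ t, Q x a s * (ginv x s t * Eform g ginv P x t)) * P x b c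
            - (1/((n:ℝ)-(p:ℝ))) * (∑ s, ∑ t, Q x a s * (ginv x s t * Wform g ginv P Q x t))
              * Q x b c := by
        calc (∑ s, ∑ t, Q x a s * (ginv x s t * Mtens g ginv P x t b c))
            = ∑ s, ∑ t, ((1/(p:ℝ)) * (Q x a s * (ginv x s t * Eform g ginv P x t)) * P x b c
              - (1/((n:ℝ)-(p:ℝ))) * (Q x a s * (ginv x s t * Wform g ginv P Q x t))
                * Q x b c) := by
              refine Finset.sum_congr rfl (fun s _ => Finset.sum_congr rfl (fun t _ => ?_))
              rw [hM0 x t b c]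
              ring
          _ = (∑ s, ∑ t, (1/(p:ℝ)) * (Q x a s * (ginv x s t * Eform g ginv P x t)) * P x b c)
              - ∑ s, ∑ t, (1/((n:ℝ)-(p:ℝ))) * (Q x a s * (ginv x s t * Wform g ginv P Q x t))
                * Q x b c := by
              rw [Finset.sum_congr rfl (fun s _ => Finset.sum_sub_distrib _ _),
                Finset.sum_sub_distrib]
          _ = _ := by rw [pullc, pullc]
      rw [e1, QgiE_full hgs hgis hPs hgi hPQg hPP hDg hDgi hDP x a,
        QgiW hgs hgis hPs hQs hgi hPP hPQ0 hDg hDgi hDP x a]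
      ring
    have hV : ∀ x a b c, Vt (p:ℝ) g ginv P Q x a b c = 0 := by
      intro x a b c
      simp only [Vt]
      have e1 : (∑ s, ∑ t, P x a s * (ginv x s t * Mtens g ginv P x t b c))
          = (1/(p:ℝ)) * (∑ s, ∑ t, P x a s * (ginv x s t * Eform g ginv P x t)) * P x b c
            - (1/((n:ℝ)-(p:ℝ))) * (∑ s, ∑ t, P x a s * (ginv x s t * Wform g ginv P Q x t))
              * Q x b c := by
        calc (∑ s, ∑ t, P x a s * (ginv x s t * Mtens g ginv P x t b c))
            = ∑ s, ∑ t, ((1/(p:ℝ)) * (P x a s * (ginv x s t * Eform g ginv P x t)) * P x b c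
              - (1/((n:ℝ)-(p:ℝ))) * (P x a s * (ginv x s t * Wform g ginv P Q x t))
                * Q x b c) := by
              refine Finset.sum_congr rfl (fun s _ => Finset.sum_congr rfl (fun t _ => ?_))
              rw [hM0 x t b c]
              ring
          _ = (∑ s, ∑ t, (1/(p:ℝ)) * (P x a s * (ginv x s t * Eform g ginv P x t)) * P x b c)
              - ∑ s, ∑ t, (1/((n:ℝ)-(p:ℝ))) * (P x a s * (ginv x s t * Wform g ginv P Q x t))
                * Q x b c := by
              rw [Finset.sum_congr rfl (fun s _ => Finset.sum_sub_distrib _ _),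
                Finset.sum_sub_distrib]
          _ = _ := by rw [pullc, pullc]
      rw [e1, PgiE hgs hgis hPs hgi hPP hDg hDgi hDP x a,
        PgiW_full hgs hgis hPs hQs hgi hPQg hPP hPQ0 hDg hDgi hDP x a]
      ring
    constructor
    · intro x a b c
      rw [covbar_P hgis hPs hQs hgi hPQg hPP hPQ0 (p:ℝ) x a b c, hU x b a c, hU x c a b]
      ring
    · intro x a b c
      rw [covbar_Q hgs hgis hPs hQs hgi hPQg hQQ hPQ0 hDg hDP (p:ℝ) x a b c,
        hV x b a c, hV x c a b]
      ring
  · rintro ⟨h1, h2⟩ x a b c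
    have hUsym : ∀ a b c : Fin n, Ut (p:ℝ) g ginv P Q x b a c + Ut (p:ℝ) g ginv P Q x c a b = 0 := by
      intro a b c
      have hh := h1 x a b c
      rw [covbar_P hgis hPs hQs hgi hPQg hPP hPQ0 (p:ℝ) x a b c] at hh
      linear_combination 2 * hh
    have hVsym : ∀ a b c : Fin n, Vt (p:ℝ) g ginv P Q x b a c + Vt (p:ℝ) g ginv P Q x c a b = 0 := by
      intro a b c
      have hh := h2 x a b c
      rw [covbar_Q hgs hgis hPs hQs hgi hPQg hQQ hPQ0 hDg hDP (p:ℝ) x a b c] at hh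
      linear_combination -2 * hh
    have hTsum : ∀ a b c : Fin n,
        Ttens (p:ℝ) g ginv P Q x b a c + Ttens (p:ℝ) g ginv P Q x c a b = 0 := by
      intro a b c
      rw [T_eq_UV hgi hPQg (p:ℝ) x b a c, T_eq_UV hgi hPQg (p:ℝ) x c a b]
      have := hUsym a b c
      have := hVsym a b c
      linarith
    have hanti : ∀ u v w : Fin n, Ttens (p:ℝ) g ginv P Q x u v w
        = -Ttens (p:ℝ) g ginv P Q x w v u := by
      intro u v w
      have := hTsum v u w
      linarith
    have hsym := Tsym (g := g) (ginv := ginv) hPs hQs (p:ℝ) x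
    have e1 := hsym a b c
    have e2 := hanti a c b
    have e3 := hsym b c a
    have e4 := hanti b a c
    have e5 := hsym c a b
    have e6 := hanti c b a
    linarith
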